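/- Let (R, α) be a regular Hom-Lie conformal superalgebra and f : R → R an even ℂ[∂]-linear map commuting with α that is a Hom-Nijenhuis operator. For t ∈ ℂ set T_t = id + tf and [a_λ b]_t = [a_λ b] + t[a_λ b]_N. Then T_t([a_λ b]_t) = [T_t(a)_λ T_t(b)] for all a, b ∈ R; that is, the deformation generated by the Hom-Nijenhuis operator f is trivial. -/
import Mathlib


noncomputable section

namespace HLCS

open scoped BigOperators

/-- Evaluation at `l : ℂ` of a polynomial (in `λ`) with coefficients in `M`,
encoded as a finitely supported family of coefficients. -/
def pev {M : Type} [AddCommGroup M] [Module ℂ M] (l : ℂ) (p : ℕ →₀ M) : M :=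
  p.sum fun n r => l ^ n • r

/-- Evaluation of a polynomial with coefficients in `M` at an operator `T`
(used for substitutions such as `-λ - ∂`). -/
def pevOp {M : Type} [AddCommGroup M] [Module ℂ M] (T : Module.End ℂ M) (p : ℕ →₀ M) : M :=
  p.sum fun n r => (T ^ n) r

/-- The super sign `(-1)^{|a||b|}` attached to parities `i`, `j`. -/
def sg (i j : ZMod 2) : ℂ := (-1 : ℂ) ^ (i * j).val

/-- The data of a `ℤ₂`-graded `ℂ[∂]`-module `R` with an endomorphism `α` and a
`ℂ`-bilinear `λ`-bracket with values in `ℂ[λ] ⊗ R` (encoded by its coefficients). -/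
structure Data (R : Type) [AddCommGroup R] [Module ℂ R] where
  der : Module.End ℂ R
  alpha : Module.End ℂ R
  G : ZMod 2 → Submodule ℂ R
  br : R →ₗ[ℂ] R →ₗ[ℂ] (ℕ →₀ R)

namespace Data

variable {R : Type} [AddCommGroup R] [Module ℂ R] (S : Data R)

/-- `[a_λ b]` evaluated at `λ = l`. -/
def lb (l : ℂ) (a b : R) : R := pev l (S.br a b)

/-- `[a_{-l-∂} b]` : the bracket with `-l - ∂` substituted for `λ`. -/
def lbOp (l : ℂ) (a b : R) : R :=
  pevOp ((-l) • (1 : Module.End ℂ R) - S.der) (S.br a b)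

/-- Multiplicativity: `α [a_λ b] = [α(a)_λ α(b)]`. -/
def Mult : Prop := ∀ (l : ℂ) (a b : R), S.alpha (S.lb l a b) = S.lb l (S.alpha a) (S.alpha b)

end Data

variable {R : Type} [AddCommGroup R] [Module ℂ R]

/-- `(R, α)` with the given data is a Hom-Lie conformal superalgebra.
All polynomial identities in `λ, μ` are stated by evaluating at arbitrary
complex numbers (which is equivalent, `ℂ` being infinite). -/
structure IsHLCS (S : Data R) : Prop where
  internal : DirectSum.IsInternal S.G
  der_even : ∀ i, ∀ a ∈ S.G i, S.der a ∈ S.G i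
  alpha_even : ∀ i, ∀ a ∈ S.G i, S.alpha a ∈ S.G i
  alpha_der : ∀ a, S.alpha (S.der a) = S.der (S.alpha a)
  br_grade : ∀ i j, ∀ a ∈ S.G i, ∀ b ∈ S.G j, ∀ n, S.br a b n ∈ S.G (i + j)
  conf_left : ∀ (l : ℂ) (a b : R), S.lb l (S.der a) b = -l • S.lb l a b
  conf_right : ∀ (l : ℂ) (a b : R), S.lb l a (S.der b) = S.der (S.lb l a b) + l • S.lb l a b
  skew : ∀ i j, ∀ a ∈ S.G i, ∀ b ∈ S.G j, ∀ l : ℂ,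
    S.lb l a b = (-sg i j) • S.lbOp l b a
  jacobi : ∀ i j, ∀ a ∈ S.G i, ∀ b ∈ S.G j, ∀ (c : R) (l m : ℂ),
    S.lb l (S.alpha a) (S.lb m b c) =
      S.lb (l + m) (S.lb l a b) (S.alpha c) + sg i j • S.lb m (S.alpha b) (S.lb l a c)

end HLCS
namespace HLCS

variable {R : Type} [AddCommGroup R] [Module ℂ R]

lemma pev_add {M : Type} [AddCommGroup M] [Module ℂ M] (l : ℂ) (p q : ℕ →₀ M) :
    pev l (p + q) = pev l p + pev l q :=
  Finsupp.sum_add_index (by simp) (by intro n _ x y; rw [smul_add])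

lemma lb_add_left (S : Data R) (l : ℂ) (a a' b : R) :
    S.lb l (a + a') b = S.lb l a b + S.lb l a' b := by
  unfold Data.lb; rw [map_add, LinearMap.add_apply, pev_add]

lemma lb_add_right (S : Data R) (l : ℂ) (a b b' : R) :
    S.lb l a (b + b') = S.lb l a b + S.lb l a b' := by
  unfold Data.lb; rw [map_add, pev_add]

lemma pev_smul {M : Type} [AddCommGroup M] [Module ℂ M] (l c : ℂ) (p : ℕ →₀ M) :
    pev l (c • p) = c • pev l p := by
  unfold pev
  rw [Finsupp.sum_smul_index' (fun i => smul_zero _), Finsupp.smul_sum]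
  exact Finsupp.sum_congr fun n _ => smul_comm _ _ _

lemma lb_smul_left (S : Data R) (l c : ℂ) (a b : R) :
    S.lb l (c • a) b = c • S.lb l a b := by
  unfold Data.lb; rw [map_smul, LinearMap.smul_apply, pev_smul]

lemma lb_smul_right (S : Data R) (l c : ℂ) (a b : R) :
    S.lb l a (c • b) = c • S.lb l a b := by
  unfold Data.lb; rw [map_smul, pev_smul]

/-- Let `(R, α)` be a regular Hom-Lie conformal superalgebra and
`f` a Hom-Nijenhuis operator.  With `T_t = id + t f` and
`[a_λ b]_t = [a_λ b] + t [a_λ b]_N`, one has `T_t([a_λ b]_t) = [T_t(a)_λ T_t(b)]`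
for all `a, b ∈ R`: the deformation generated by `f` is trivial. -/
theorem nijenhuis_deformation_trivial (S : Data R) (hS : IsHLCS S)
    (hmult : S.Mult) (hbij : Function.Bijective S.alpha)
    (f : R →ₗ[ℂ] R)
    (heven : ∀ i, ∀ a ∈ S.G i, f a ∈ S.G i)
    (hder : ∀ a, f (S.der a) = S.der (f a))
    (halpha : ∀ a, f (S.alpha a) = S.alpha (f a))
    (hNij : ∀ (l : ℂ) (a b : R),
      S.lb l (f a) (f b) = f (S.lb l (f a) b + S.lb l a (f b) - f (S.lb l a b)))
    (t : ℂ) :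
    ∀ (l : ℂ) (a b : R),
      (S.lb l a b + t • (S.lb l (f a) b + S.lb l a (f b) - f (S.lb l a b))) +
          t • f (S.lb l a b + t • (S.lb l (f a) b + S.lb l a (f b) - f (S.lb l a b))) =
        S.lb l (a + t • f a) (b + t • f b) := by
  intro l a b
  rw [lb_add_left, lb_add_right, lb_add_right, lb_smul_left, lb_smul_right, lb_smul_right,
    lb_smul_left, smul_smul, hNij, map_add, map_smul, map_sub, map_add]
  module

end HLCS
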